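/- Let M ≥ 1, N ≥ 1 be integers, and consider Φ_M = {φ_{m/M} : 0 ≤ m ≤ M} and Ψ_M = {ψ_{M,m} : 1 ≤ m ≤ M} in L²(Ω_I). Then the Kolmogorov N-widths satisfy d_N(Φ_M) ≥ (1/2)·d_N(Ψ_M). -/

import Mathlib

/-! On Ω_I (where t > 0) one has ψ_{M,m+1} = φ_{m/M} − φ_{(m+1)/M} almost everywhere, so each
element of Ψ_M is a difference of two elements of Φ_M. The distance to a subspace `V` is the
quotient seminorm on `L² ⧸ V`, hence subadditive, so for every `V` the worst-case error on Ψ_M is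
at most twice that on Φ_M; taking the infimum over `V` gives the bound. -/

noncomputable section
open MeasureTheory Set ENNReal

/-- The space-time domain Ω_I = (0,1) × (−1,1). -/
def ΩI : Set (ℝ × ℝ) := Ioo (0:ℝ) 1 ×ˢ Ioo (-1:ℝ) 1

instance : Fact (volume ΩI < ∞) := by
  constructor
  rw [ΩI, Measure.volume_eq_prod, Measure.prod_prod, Real.volume_Ioo, Real.volume_Ioo]
  exact ENNReal.mul_lt_top ENNReal.ofReal_lt_top ENNReal.ofReal_lt_top

/-- Lebesgue measure restricted to Ω_I. -/
def volΩ : Measure (ℝ × ℝ) := volume.restrict ΩI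

instance : IsFiniteMeasure volΩ := by
  rw [volΩ]; infer_instance

/-- The parametrized solution φ_μ as a function on ℝ × ℝ. -/
def phiFun (μ : ℝ) : ℝ × ℝ → ℝ := fun p =>
  if p.2 < -μ * p.1 then 1 else if μ * p.1 ≤ p.2 then -1 else 0

lemma phiFun_measurable (μ : ℝ) : Measurable (phiFun μ) := by
  unfold phiFun
  refine Measurable.ite ?_ measurable_const (Measurable.ite ?_ measurable_const measurable_const)
  · exact measurableSet_lt measurable_snd (measurable_fst.const_mul (-μ))
  · exact measurableSet_le (measurable_fst.const_mul μ) measurable_snd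

lemma phiFun_memℒp (μ : ℝ) : MemLp (phiFun μ) 2 volΩ := by
  refine MemLp.of_bound (phiFun_measurable μ).aestronglyMeasurable 1 ?_
  refine Filter.Eventually.of_forall fun p => ?_
  unfold phiFun
  split_ifs <;> simp

/-- φ_μ as an element of L²(Ω_I). -/
def phiLp (μ : ℝ) : Lp ℝ 2 volΩ := (phiFun_memℒp μ).toLp (phiFun μ)

/-- ψ_{M,m} as a function on ℝ × ℝ. -/
def psiFun (M m : ℕ) : ℝ × ℝ → ℝ := fun p =>
  if (-((m:ℝ)/M) * p.1 ≤ p.2 ∧ p.2 < -(((m:ℝ)-1)/M) * p.1) then 1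
  else if ((((m:ℝ)-1)/M) * p.1 ≤ p.2 ∧ p.2 < ((m:ℝ)/M) * p.1) then -1 else 0

lemma psiFun_measurable (M m : ℕ) : Measurable (psiFun M m) := by
  unfold psiFun
  refine Measurable.ite ?_ measurable_const (Measurable.ite ?_ measurable_const measurable_const) <;>
  · exact MeasurableSet.inter
      (measurableSet_le (measurable_fst.const_mul _) measurable_snd)
      (measurableSet_lt measurable_snd (measurable_fst.const_mul _))

lemma psiFun_memℒp (M m : ℕ) : MemLp (psiFun M m) 2 volΩ := by
  refine MemLp.of_bound (psiFun_measurable M m).aestronglyMeasurable 1 ?_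
  refine Filter.Eventually.of_forall fun p => ?_
  unfold psiFun
  split_ifs <;> simp

/-- ψ_{M,m} as an element of L²(Ω_I). -/
def psiLp (M m : ℕ) : Lp ℝ 2 volΩ := (psiFun_memℒp M m).toLp (psiFun M m)

open Metric Module

theorem AddSubgroup.infDist_sub_le {E : Type*} [SeminormedAddCommGroup E] (S : AddSubgroup E)
    (x y : E) : infDist (x - y) S ≤ infDist x S + infDist y S := by
  simp only [← QuotientAddGroup.norm_mk, QuotientAddGroup.mk_sub]
  exact norm_sub_le _ _

theorem iSup_infDist_le_two_mul_of_forall_eq_sub {E ι κ : Type*} [SeminormedAddCommGroup E]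
    [Finite κ] (S : AddSubgroup E) (φ : κ → E) (ψ : ι → E) (hψ : ∀ i, ∃ j k, ψ i = φ j - φ k) :
    ⨆ i, infDist (ψ i) S ≤ 2 * ⨆ k, infDist (φ k) S := by
  have hφ (k : κ) : infDist (φ k) S ≤ ⨆ k, infDist (φ k) S :=
    le_ciSup (f := fun k => infDist (φ k) S) (Set.finite_range _).bddAbove k
  have hφ_nonneg : 0 ≤ ⨆ k, infDist (φ k) S := Real.iSup_nonneg fun _ => infDist_nonneg
  refine Real.iSup_le (fun i => ?_) (by linarith)
  obtain ⟨j, k, hi⟩ := hψ i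
  rw [hi]
  linarith [S.infDist_sub_le (φ j) (φ k), hφ j, hφ k]

theorem phiFun_sub_phiFun {a b : ℝ} (ha : 0 ≤ a) (hab : a ≤ b) {p : ℝ × ℝ} (hp : 0 ≤ p.1) :
    phiFun a p - phiFun b p =
      if -b * p.1 ≤ p.2 ∧ p.2 < -a * p.1 then 1
      else if a * p.1 ≤ p.2 ∧ p.2 < b * p.1 then -1 else 0 := by
  have hat : -a * p.1 ≤ a * p.1 := by nlinarith
  have hbt : a * p.1 ≤ b * p.1 := by nlinarith
  simp only [phiFun]
  split_ifs <;> grind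

theorem psiFun_succ_eq_phiFun_sub (M m : ℕ) {p : ℝ × ℝ} (hp : 0 ≤ p.1) :
    psiFun M (m + 1) p = phiFun (m / M) p - phiFun ((m + 1 : ℕ) / M) p := by
  have hsub : ((m + 1 : ℕ) : ℝ) - 1 = m := by push_cast; ring
  rw [phiFun_sub_phiFun (by positivity) (by gcongr; simp) hp, psiFun, hsub]

theorem psiLp_succ_eq_phiLp_sub (M m : ℕ) :
    psiLp M (m + 1) = phiLp (m / M) - phiLp ((m + 1 : ℕ) / M) := by
  rw [psiLp, phiLp, phiLp, ← MemLp.toLp_sub]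
  refine MemLp.toLp_congr _ _ ((ae_restrict_iff' (measurableSet_Ioo.prod measurableSet_Ioo)).2 ?_)
  exact .of_forall fun p hp => psiFun_succ_eq_phiFun_sub M m hp.1.1.le

theorem kolmogorov_nwidth_phi_ge_half_psi_general (M N : ℕ) :
    (1 / 2) * (⨅ V : {V : Submodule ℝ (Lp ℝ 2 volΩ) // finrank ℝ V = N},
        ⨆ m : Fin M, infDist (psiLp M (m.1 + 1)) (V.1 : Set (Lp ℝ 2 volΩ)))
      ≤ ⨅ V : {V : Submodule ℝ (Lp ℝ 2 volΩ) // finrank ℝ V = N},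
        ⨆ m : Fin (M + 1), infDist (phiLp ((m.1 : ℝ) / M)) (V.1 : Set (Lp ℝ 2 volΩ)) := by
  rw [Real.mul_iInf_of_nonneg (by norm_num)]
  refine ciInf_mono ⟨0, ?_⟩ fun V => ?_
  · rintro _ ⟨V, rfl⟩
    exact mul_nonneg (by norm_num) (Real.iSup_nonneg fun _ => infDist_nonneg)
  · have hψ (m : Fin M) : ∃ j k : Fin (M + 1),
        psiLp M (m.1 + 1) = phiLp ((j.1 : ℝ) / M) - phiLp ((k.1 : ℝ) / M) :=
      ⟨m.castSucc, m.succ, psiLp_succ_eq_phiLp_sub M m⟩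
    have hV := iSup_infDist_le_two_mul_of_forall_eq_sub V.1.toAddSubgroup _ _ hψ
    rw [Submodule.coe_toAddSubgroup] at hV
    linarith

/-- For M, N ≥ 1 the Kolmogorov N-widths in L²(Ω_I) of
Φ_M = {φ_{m/M} : 0 ≤ m ≤ M} and Ψ_M = {ψ_{M,m} : 1 ≤ m ≤ M} satisfy
d_N(Φ_M) ≥ (1/2)·d_N(Ψ_M). -/
theorem kolmogorov_nwidth_phi_ge_half_psi (M N : ℕ) (hM : 1 ≤ M) (hN : 1 ≤ N) :
    (1 / 2) * (⨅ V : {V : Submodule ℝ (Lp ℝ 2 volΩ) // finrank ℝ V = N},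
        ⨆ m : Fin M, infDist (psiLp M (m.1 + 1)) (V.1 : Set (Lp ℝ 2 volΩ)))
      ≤ ⨅ V : {V : Submodule ℝ (Lp ℝ 2 volΩ) // finrank ℝ V = N},
        ⨆ m : Fin (M + 1), infDist (phiLp ((m.1 : ℝ) / M)) (V.1 : Set (Lp ℝ 2 volΩ)) :=
  kolmogorov_nwidth_phi_ge_half_psi_general M N
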